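/- For integers m ≥ 0 and n, k ≥ 1, one has x₁^m ш (x₀^n x₁^k) = Σ_{m₁+m₂=m, m_i ≥ 0} C(m₂+k-1, k-1) · 𝔅_{m₁+1}^{n} x₁^{m₂+k}, an identity of multisets of words, where a binomial coefficient c multiplying a multiset means the multiset repeated c times. -/

import Mathlib

/-- The shuffle product of two words, as a multiset of words. -/
def shuffle {X : Type*} : List X → List X → Multiset (List X)
  | u, [] => {u}
  | [], v => {v}
  | a :: u, b :: v =>
      (shuffle u (b :: v)).map (a :: ·) + (shuffle (a :: u) v).map (b :: ·)
termination_by u v => u.length + v.length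

/-- The two-letter alphabet `X = {x₀, x₁}`. -/
def x0 : Bool := false
def x1 : Bool := true

/-- `𝔅_r^m`: the multiset of all words `x₀^{m₁} x₁ x₀^{m₂} x₁ ⋯ x₁ x₀^{m_r}`
with `m₁ + ⋯ + m_r = m`, `m_i ≥ 0`. -/
def B (r m : ℕ) : Multiset (List Bool) :=
  (Finset.Nat.antidiagonalTuple r m).val.map fun f =>
    List.intercalate [x1] (List.ofFn fun i => List.replicate (f i) x0)

/-- `S w T`: the multiset of all concatenations `u ++ w ++ v` with `u ∈ S`, `v ∈ T`,
counted with multiplicity. -/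
def msConcat {X : Type*} (S : Multiset (List X)) (w : List X) (T : Multiset (List X)) :
    Multiset (List X) :=
  S.bind fun u => T.map fun v => u ++ w ++ v

/-!
Both sides obey the recursion obtained by peeling off the first letter:
`x₁^{m+1} ш x₀^{n+1}x₁^k = x₁·(x₁^m ш x₀^{n+1}x₁^k) + x₀·(x₁^{m+1} ш x₀^n x₁^k)`, and on the
right a word of `𝔅_{r+1}^{n+1}` starts with `x₁` (empty first block) or with `x₀`. The boundary
cases are `m = 0`, where both sides are the single word, and `n = 0`, where the left side is
`C(m+k, m) x₁^{m+k}` and the right side sums to the same by the hockey-stick identity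
`∑_{j ≤ m} C(j+k-1, k-1) = C(m+k, k)`.
-/

open Finset

section Shuffle

variable {X : Type*}

@[simp]
lemma shuffle_nil_left (v : List X) : shuffle [] v = {v} := by
  cases v <;> simp [shuffle]

@[simp]
lemma shuffle_nil_right (u : List X) : shuffle u [] = {u} := by
  simp [shuffle]

lemma shuffle_cons_cons (a b : X) (u v : List X) :
    shuffle (a :: u) (b :: v) =
      (shuffle u (b :: v)).map (a :: ·) + (shuffle (a :: u) v).map (b :: ·) := by
  rw [shuffle]

lemma shuffle_replicate_replicate (c : X) (a b : ℕ) :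
    shuffle (List.replicate a c) (List.replicate b c) =
      (a + b).choose a • {List.replicate (a + b) c} := by
  induction a generalizing b with
  | zero => simp
  | succ a iha =>
    induction b with
    | zero => simp
    | succ b ihb =>
      rw [List.replicate_succ, List.replicate_succ, shuffle_cons_cons, ← List.replicate_succ,
        ← List.replicate_succ, iha, ihb, Multiset.map_nsmul, Multiset.map_nsmul,
        Multiset.map_singleton, Multiset.map_singleton, ← List.replicate_succ,
        ← List.replicate_succ, show a + (b + 1) = a + 1 + b by omega, ← add_nsmul,
        ← Nat.choose_succ_succ']
      rfl

end Shuffle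

lemma Multiset.map_finset_sum {ι α β : Type*} (s : Finset ι) (F : ι → Multiset α) (g : α → β) :
    (∑ i ∈ s, F i).map g = ∑ i ∈ s, (F i).map g :=
  map_sum (Multiset.mapAddMonoidHom g) F s

def blockWord {r : ℕ} (f : Fin r → ℕ) : List Bool :=
  List.intercalate [x1] (List.ofFn fun i => List.replicate (f i) x0)

lemma blockWord_cons {r : ℕ} (a : ℕ) (f : Fin (r + 1) → ℕ) :
    blockWord (Fin.cons a f : Fin (r + 2) → ℕ) = List.replicate a x0 ++ x1 :: blockWord f := by
  rw [blockWord, List.ofFn_succ, List.intercalate_cons_of_ne_nil (by simp)]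
  simp [blockWord]

lemma B_eq_map_blockWord (r n : ℕ) :
    B r n = (Finset.Nat.antidiagonalTuple r n).val.map blockWord := rfl

lemma B_one (n : ℕ) : B 1 n = {List.replicate n x0} := by
  simp [B_eq_map_blockWord, blockWord]

lemma B_add_two (r n : ℕ) :
    B (r + 2) n = ∑ p ∈ antidiagonal n, (B (r + 1) p.2).map (List.replicate p.1 x0 ++ x1 :: ·) := by
  have hsplit : (Finset.Nat.antidiagonalTuple (r + 2) n).val = (antidiagonal n).val.bind
      fun p => (Finset.Nat.antidiagonalTuple (r + 1) p.2).val.map (Fin.cons p.1) := by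
    change Multiset.ofList (List.Nat.antidiagonalTuple (r + 2) n) = _
    rw [List.Nat.antidiagonalTuple, ← Multiset.coe_bind]
    rfl
  rw [B_eq_map_blockWord, hsplit, Multiset.map_bind]
  refine Multiset.bind_congr fun p _ => ?_
  rw [Multiset.map_map, B_eq_map_blockWord, Multiset.map_map]
  exact Multiset.map_congr rfl fun f _ => blockWord_cons p.1 f

lemma B_succ_zero (r : ℕ) : B (r + 1) 0 = {List.replicate r x1} := by
  induction r with
  | zero => exact B_one 0
  | succ r ih => simp [B_add_two, ih, List.replicate_succ]

lemma B_add_two_succ (r n : ℕ) :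
    B (r + 2) (n + 1) = (B (r + 1) (n + 1)).map (x1 :: ·) + (B (r + 2) n).map (x0 :: ·) := by
  rw [B_add_two, Finset.Nat.sum_antidiagonal_succ, B_add_two r n, Multiset.map_finset_sum]
  simp [Multiset.map_map, List.replicate_succ]

def shuffleExpansion (k m n : ℕ) : Multiset (List Bool) :=
  ∑ p ∈ antidiagonal m, (p.2 + k - 1).choose (k - 1) •
    (B (p.1 + 1) n).map (· ++ List.replicate (p.2 + k) x1)

lemma shuffleExpansion_zero_left (k n : ℕ) :
    shuffleExpansion k 0 n = {List.replicate n x0 ++ List.replicate k x1} := by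
  simp [shuffleExpansion, B_one]

lemma shuffleExpansion_zero_right {k : ℕ} (hk : 1 ≤ k) (m : ℕ) :
    shuffleExpansion k m 0 = (m + k).choose m • {List.replicate (m + k) x1} := by
  obtain ⟨d, rfl⟩ : ∃ d, k = d + 1 := ⟨k - 1, by omega⟩
  have hterm : ∀ p ∈ antidiagonal m, (p.2 + (d + 1) - 1).choose (d + 1 - 1) •
      (B (p.1 + 1) 0).map (· ++ List.replicate (p.2 + (d + 1)) x1) =
        (d + p.2).choose d • {List.replicate (m + (d + 1)) x1} := by
    intro p hp
    rw [HasAntidiagonal.mem_antidiagonal] at hp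
    rw [B_succ_zero, Multiset.map_singleton, ← List.replicate_add, ← hp, Nat.add_sub_cancel,
      show p.2 + (d + 1) - 1 = d + p.2 by omega, Nat.add_assoc p.1]
  rw [shuffleExpansion, sum_congr rfl hterm, ← sum_smul, sum_antidiagonal_choose_add,
    Nat.choose_symm_add]
  congr 2
  omega

lemma shuffleExpansion_succ_succ (k m n : ℕ) :
    shuffleExpansion k (m + 1) (n + 1) =
      (shuffleExpansion k m (n + 1)).map (x1 :: ·) +
        (shuffleExpansion k (m + 1) n).map (x0 :: ·) := by
  simp only [shuffleExpansion, Finset.Nat.sum_antidiagonal_succ, zero_add, B_one, B_add_two_succ,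
    List.replicate_succ, Multiset.map_singleton, Multiset.map_add, smul_add, sum_add_distrib,
    Multiset.map_finset_sum, Multiset.map_nsmul, Multiset.map_map, Function.comp_def,
    List.cons_append]
  abel

theorem shuffle_x1_pow_x0_pow_x1_pow_general (m n k : ℕ) (hk : 1 ≤ k) :
    shuffle (List.replicate m x1) (List.replicate n x0 ++ List.replicate k x1) =
      ∑ p ∈ Finset.HasAntidiagonal.antidiagonal m,
        Nat.choose (p.2 + k - 1) (k - 1) •
          (B (p.1 + 1) n).map (fun w => w ++ List.replicate (p.2 + k) x1) := by
  change _ = shuffleExpansion k m n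
  induction m generalizing n with
  | zero => simp [shuffleExpansion_zero_left]
  | succ m ihm =>
    induction n with
    | zero =>
      rw [List.replicate_zero, List.nil_append, shuffle_replicate_replicate,
        shuffleExpansion_zero_right hk]
    | succ n ihn =>
      calc shuffle (List.replicate (m + 1) x1) (List.replicate (n + 1) x0 ++ List.replicate k x1)
          = (shuffle (List.replicate m x1) (List.replicate (n + 1) x0 ++ List.replicate k x1)).map
                (x1 :: ·) +
              (shuffle (List.replicate (m + 1) x1) (List.replicate n x0 ++ List.replicate k x1)).map
                (x0 :: ·) :=
            shuffle_cons_cons x1 x0 _ _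
        _ = shuffleExpansion k (m + 1) (n + 1) := by rw [ihm, ihn, shuffleExpansion_succ_succ]

theorem shuffle_x1_pow_x0_pow_x1_pow (m n k : ℕ) (hn : 1 ≤ n) (hk : 1 ≤ k) :
    shuffle (List.replicate m x1) (List.replicate n x0 ++ List.replicate k x1) =
      ∑ p ∈ Finset.HasAntidiagonal.antidiagonal m,
        Nat.choose (p.2 + k - 1) (k - 1) •
          (B (p.1 + 1) n).map (fun w => w ++ List.replicate (p.2 + k) x1) :=
  shuffle_x1_pow_x0_pow_x1_pow_general m n k hk
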